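/- arXiv:2511.20535 — 7 statements merged into one kernel-verified Lean document; each statement's English description precedes it below -/
import Mathlib

section
/- Assume |c| < 1. Then Z ⊆ K⁻ and K⁻ ⊆ R ∪ Z. -/
/-!
Write `x n` for the first coordinate of `gⁿ z`, so that `x (n+1) * x (n+2) = x n - c`, and let
`γ = |c| < 1`. By the ultrametric inequality `|x (n+1)| |x (n+2)| = max (|x n|, γ)` whenever
`|x n| ≠ γ`, and since norms lie in `pᶻ`, a norm below `1` is at most `1/p` and a norm above `1` is
at least `p`. Along a bounded orbit, a pair `|x n| < |x (n+1)|` with `|x (n+1)| > 1` would recur two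
steps later with `|x (n+1)|` multiplied by `p`, so it never occurs; hence a norm above `1` is
followed by norms above `1`, which then shrink by factors `p`: all norms are `≤ 1`. Then a norm
above `γ` stays above `γ`, and a norm below `1` among those would again recur two steps later
multiplied by `p`, so from there on all norms are `1`; a norm below `γ` would force `γ ≤ γ²`. So
the orbit starts at norms `(1, 1)` or `(γ, γ)`, and conversely norms `(1, 1)` propagate.
-/

variable {p : ℕ}

/-- The unique `f`-preimage map `g(u,v) = (v, (u - c)/v)`. -/
noncomputable def g [Fact p.Prime] (c : ℚ_[p]) (z : ℚ_[p] × ℚ_[p]) : ℚ_[p] × ℚ_[p] :=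
  (z.2, (z.1 - c) / z.2)

/-- The set `Q` of points whose backward iterates are all defined. -/
def QSet [Fact p.Prime] (c : ℚ_[p]) : Set (ℚ_[p] × ℚ_[p]) :=
  {z | ∀ n : ℕ, ((g c)^[n] z).2 ≠ 0}

/-- `‖(x,y)‖ = max(|x|,|y|)`. -/
noncomputable def pnorm [Fact p.Prime] (z : ℚ_[p] × ℚ_[p]) : ℝ := max ‖z.1‖ ‖z.2‖

/-- The backward filled Julia set `K⁻`. -/
def KMinus [Fact p.Prime] (c : ℚ_[p]) : Set (ℚ_[p] × ℚ_[p]) :=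
  {z | z ∈ QSet c ∧ ∃ M : ℝ, ∀ n : ℕ, pnorm ((g c)^[n] z) ≤ M}

theorem exists_lt_of_forall_exists_mul_le {ι : Type*} {S : Set ι} {f : ι → ℝ} {P : ℝ}
    (hP : 1 < P) (hS : ∀ i ∈ S, ∃ j ∈ S, P * f i ≤ f j) {i : ι} (hi : i ∈ S) (hfi : 0 < f i)
    (M : ℝ) : ∃ j ∈ S, M < f j := by
  have hpow : ∀ n : ℕ, ∃ j ∈ S, P ^ n * f i ≤ f j := by
    intro n
    induction n with
    | zero => exact ⟨i, hi, by simp⟩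
    | succ n ih =>
      obtain ⟨j, hj, hij⟩ := ih
      obtain ⟨k, hk, hjk⟩ := hS j hj
      refine ⟨k, hk, ?_⟩
      calc P ^ (n + 1) * f i = P * (P ^ n * f i) := by ring
        _ ≤ P * f j := by gcongr
        _ ≤ f k := hjk
  obtain ⟨n, hn⟩ := pow_unbounded_of_one_lt (M / f i) hP
  obtain ⟨j, hj, hij⟩ := hpow n
  exact ⟨j, hj, ((div_lt_iff₀ hfi).1 hn).trans_le hij⟩

namespace Padic

variable [Fact p.Prime]

theorem natCast_mul_norm_le_one_of_norm_lt_one {y : ℚ_[p]} (h : ‖y‖ < 1) : (p : ℝ) * ‖y‖ ≤ 1 := by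
  have hp : (0 : ℝ) < p := by exact_mod_cast (Fact.out : p.Prime).pos
  have hy : ‖y‖ ≤ (p : ℝ) ^ (-1 : ℤ) :=
    (norm_lt_pow_iff_norm_le_pow_sub_one y 0).1 (by rwa [zpow_zero])
  rw [zpow_neg_one] at hy
  calc (p : ℝ) * ‖y‖ ≤ p * (p : ℝ)⁻¹ := by gcongr
    _ = 1 := mul_inv_cancel₀ hp.ne'

theorem natCast_le_norm_of_one_lt_norm {y : ℚ_[p]} (h : 1 < ‖y‖) : (p : ℝ) ≤ ‖y‖ := by
  by_contra! hy
  have := (norm_lt_pow_iff_norm_le_pow_sub_one y 1).1 (by rwa [zpow_one])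
  rw [sub_self, zpow_zero] at this
  exact this.not_gt h

end Padic

section Ultrametric

variable {K : Type*} [NormedField K] [IsUltrametricDist K] {c : K} {x : ℕ → K}

theorem norm_mul_norm_le_max_of_mul_eq_sub (hx : ∀ n, x (n + 1) * x (n + 2) = x n - c) (n : ℕ) :
    ‖x (n + 1)‖ * ‖x (n + 2)‖ ≤ max ‖x n‖ ‖c‖ := by
  rw [← norm_mul, hx, sub_eq_add_neg, ← norm_neg c]
  exact IsUltrametricDist.norm_add_le_max _ _

theorem norm_mul_norm_eq_max_of_mul_eq_sub (hx : ∀ n, x (n + 1) * x (n + 2) = x n - c) {n : ℕ}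
    (h : ‖x n‖ ≠ ‖c‖) : ‖x (n + 1)‖ * ‖x (n + 2)‖ = max ‖x n‖ ‖c‖ := by
  rw [← norm_mul, hx, sub_eq_add_neg, ← norm_neg c]
  exact IsUltrametricDist.norm_add_eq_max_of_norm_ne_norm (by rwa [norm_neg])

theorem norm_mul_norm_eq_of_norm_gt (hx : ∀ n, x (n + 1) * x (n + 2) = x n - c) {n : ℕ}
    (h : ‖c‖ < ‖x n‖) : ‖x (n + 1)‖ * ‖x (n + 2)‖ = ‖x n‖ := by
  rw [norm_mul_norm_eq_max_of_mul_eq_sub hx h.ne', max_eq_left h.le]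

theorem norm_eq_one_of_mul_eq_sub (hx : ∀ n, x (n + 1) * x (n + 2) = x n - c) (hc : ‖c‖ < 1)
    (h0 : ‖x 0‖ = 1) (h1 : ‖x 1‖ = 1) (n : ℕ) : ‖x n‖ = 1 := by
  suffices ∀ n, ‖x n‖ = 1 ∧ ‖x (n + 1)‖ = 1 from (this n).1
  intro n
  induction n with
  | zero => exact ⟨h0, h1⟩
  | succ n ih =>
    have := norm_mul_norm_eq_of_norm_gt hx (ih.1 ▸ hc)
    rw [ih.1, ih.2, one_mul] at this
    exact ⟨ih.2, this⟩

end Ultrametric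

section PadicSequence

variable [Fact p.Prime] {c : ℚ_[p]} {x : ℕ → ℚ_[p]}

theorem not_one_lt_norm_succ_and_norm_lt (hx : ∀ n, x (n + 1) * x (n + 2) = x n - c)
    (hc : ‖c‖ < 1) {M : ℝ} (hM : ∀ n, ‖x n‖ ≤ M) (n : ℕ) :
    ¬ (1 < ‖x (n + 1)‖ ∧ ‖x n‖ < ‖x (n + 1)‖) := by
  intro hn
  have hp : (1 : ℝ) < p := by exact_mod_cast (Fact.out : p.Prime).one_lt
  suffices hS : ∀ n ∈ {n | 1 < ‖x (n + 1)‖ ∧ ‖x n‖ < ‖x (n + 1)‖},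
      ∃ m ∈ {n | 1 < ‖x (n + 1)‖ ∧ ‖x n‖ < ‖x (n + 1)‖}, (p : ℝ) * ‖x (n + 1)‖ ≤ ‖x (m + 1)‖ by
    obtain ⟨m, -, hm⟩ := exists_lt_of_forall_exists_mul_le hp hS hn (by linarith [hn.1]) M
    exact (hM _).not_gt hm
  rintro n ⟨h1, hlt⟩
  have hgt : ‖c‖ < ‖x (n + 1)‖ := hc.trans h1
  have hsmall : ‖x (n + 2)‖ < 1 := by
    by_contra! h
    have := norm_mul_norm_le_max_of_mul_eq_sub hx n
    nlinarith [max_lt hlt hgt]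
  have hgap := Padic.natCast_mul_norm_le_one_of_norm_lt_one hsmall
  have hrec := norm_mul_norm_eq_of_norm_gt hx hgt
  have hgrow : (p : ℝ) * ‖x (n + 1)‖ ≤ ‖x (n + 3)‖ := by
    rw [← hrec]
    nlinarith [norm_nonneg (x (n + 3))]
  refine ⟨n + 2, ⟨?_, ?_⟩, hgrow⟩ <;> nlinarith

theorem one_lt_norm_succ_of_one_lt_norm (hx : ∀ n, x (n + 1) * x (n + 2) = x n - c)
    (hc : ‖c‖ < 1) {M : ℝ} (hM : ∀ n, ‖x n‖ ≤ M) {n : ℕ} (hn : 1 < ‖x n‖) :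
    1 < ‖x (n + 1)‖ := by
  by_contra! h
  have hrec := norm_mul_norm_eq_of_norm_gt hx (hc.trans hn)
  have : ‖x n‖ ≤ ‖x (n + 2)‖ := hrec ▸ mul_le_of_le_one_left (norm_nonneg _) h
  exact not_one_lt_norm_succ_and_norm_lt hx hc hM (n + 1) ⟨by linarith, by linarith⟩

theorem norm_le_one_of_bounded (hx : ∀ n, x (n + 1) * x (n + 2) = x n - c)
    (hc : ‖c‖ < 1) {M : ℝ} (hM : ∀ n, ‖x n‖ ≤ M) (n : ℕ) : ‖x n‖ ≤ 1 := by
  by_contra! hn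
  have hp : (1 : ℝ) < p := by exact_mod_cast (Fact.out : p.Prime).one_lt
  have hgt : ∀ k ≥ n, 1 < ‖x k‖ := fun k hk ↦ by
    induction k, hk using Nat.le_induction with
    | base => exact hn
    | succ k _ ih => exact one_lt_norm_succ_of_one_lt_norm hx hc hM ih
  -- the norms decrease by a factor `p` at each step, so their inverses grow
  suffices hS : ∀ k ∈ {k | n ≤ k}, ∃ l ∈ {k | n ≤ k}, (p : ℝ) * ‖x k‖⁻¹ ≤ ‖x l‖⁻¹ by
    obtain ⟨k, hk, hlt⟩ := exists_lt_of_forall_exists_mul_le hp hS (le_refl n)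
      (inv_pos.2 (by linarith)) 1
    exact (inv_lt_one_of_one_lt₀ (hgt k hk)).not_gt hlt
  intro k (hk : n ≤ k)
  refine ⟨k + 1, Nat.le_succ_of_le hk, ?_⟩
  have hrec := norm_mul_norm_eq_of_norm_gt hx (hc.trans (hgt k hk))
  have hbig := Padic.natCast_le_norm_of_one_lt_norm (hgt (k + 2) (by omega))
  have hdecay : (p : ℝ) * ‖x (k + 1)‖ ≤ ‖x k‖ := by
    rw [← hrec, mul_comm]
    exact mul_le_mul_of_nonneg_left hbig (norm_nonneg _)
  rw [← div_eq_mul_inv, div_le_iff₀ (by linarith [hgt k hk]), inv_mul_eq_div,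
    le_div_iff₀ (by linarith [hgt (k + 1) (by omega)])]
  exact hdecay

theorem norm_eq_one_of_norm_gt (hx : ∀ n, x (n + 1) * x (n + 2) = x n - c)
    (hle : ∀ n, ‖x n‖ ≤ 1) {m : ℕ} (hm : ‖c‖ < ‖x m‖) {k : ℕ} (hk : m ≤ k) : ‖x k‖ = 1 := by
  have hp : (1 : ℝ) < p := by exact_mod_cast (Fact.out : p.Prime).one_lt
  have hgt : ∀ k ≥ m, ‖c‖ < ‖x k‖ := fun k hk ↦ by
    induction k, hk using Nat.le_induction with
    | base => exact hm
    | succ k _ ih =>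
      rw [← norm_mul_norm_eq_of_norm_gt hx ih] at ih
      exact ih.trans_le (mul_le_of_le_one_right (norm_nonneg _) (hle _))
  have hrec : ∀ k ≥ m, ‖x (k + 1)‖ * ‖x (k + 2)‖ = ‖x k‖ :=
    fun k hk ↦ norm_mul_norm_eq_of_norm_gt hx (hgt k hk)
  -- `‖x (k+1)‖² = ‖x (k+1)‖ ‖x (k+2)‖ ‖x (k+3)‖ ≤ ‖x k‖`
  have hsucc : ∀ k ≥ m, ‖x k‖ < 1 → ‖x (k + 1)‖ < 1 := by
    intro k hk hlt
    have h3 := mul_le_of_le_one_right (norm_nonneg (x (k + 2))) (hle (k + 3))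
    have := hrec (k + 1) (by omega)
    nlinarith [hrec k hk, norm_nonneg (x (k + 1))]
  refine (hle k).antisymm (not_lt.1 fun hlt ↦ ?_)
  suffices hS : ∀ j ∈ {j | m ≤ j ∧ ‖x j‖ < 1}, ∃ l ∈ {j | m ≤ j ∧ ‖x j‖ < 1},
      (p : ℝ) * ‖x j‖ ≤ ‖x l‖ by
    obtain ⟨j, ⟨-, hj⟩, hlt'⟩ := exists_lt_of_forall_exists_mul_le hp hS ⟨hk, hlt⟩
      ((norm_nonneg c).trans_lt (hgt k hk)) 1
    linarith
  rintro j ⟨hj, hlt⟩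
  have h1 := hsucc j hj hlt
  refine ⟨j + 2, ⟨by omega, hsucc (j + 1) (by omega) h1⟩, ?_⟩
  rw [← hrec j hj, ← mul_assoc]
  exact mul_le_of_le_one_left (norm_nonneg _) (Padic.natCast_mul_norm_le_one_of_norm_lt_one h1)

theorem norm_succ_le_of_norm_le (hx : ∀ n, x (n + 1) * x (n + 2) = x n - c) (hc : ‖c‖ < 1)
    (hle : ∀ n, ‖x n‖ ≤ 1) {n : ℕ} (hn : ‖x n‖ ≤ ‖c‖) : ‖x (n + 1)‖ ≤ ‖c‖ := by
  by_contra! h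
  have := norm_mul_norm_le_max_of_mul_eq_sub hx n
  rw [norm_eq_one_of_norm_gt hx hle h le_rfl, norm_eq_one_of_norm_gt hx hle h (Nat.le_succ _),
    max_eq_right hn] at this
  linarith

theorem norm_le_norm_of_forall_norm_le_one (hx : ∀ n, x (n + 1) * x (n + 2) = x n - c) (hc : ‖c‖ < 1)
    (hle : ∀ n, ‖x n‖ ≤ 1) (n : ℕ) : ‖c‖ ≤ ‖x n‖ := by
  by_contra! hn
  have hrec := norm_mul_norm_eq_max_of_mul_eq_sub hx hn.ne
  rw [max_eq_right hn.le] at hrec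
  have h1 := norm_succ_le_of_norm_le hx hc hle hn.le
  have h2 := norm_succ_le_of_norm_le hx hc hle h1
  have hpos : 0 < ‖c‖ := (norm_nonneg _).trans_lt hn
  nlinarith [mul_le_mul h1 h2 (norm_nonneg _) hpos.le]

theorem norm_zero_one_eq_of_bounded (hx : ∀ n, x (n + 1) * x (n + 2) = x n - c) (hc : ‖c‖ < 1)
    {M : ℝ} (hM : ∀ n, ‖x n‖ ≤ M) :
    (‖x 0‖ = ‖c‖ ∧ ‖x 1‖ = ‖c‖) ∨ (‖x 0‖ = 1 ∧ ‖x 1‖ = 1) := by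
  have hle := norm_le_one_of_bounded hx hc hM
  rcases (norm_le_norm_of_forall_norm_le_one hx hc hle 0).lt_or_eq with h0 | h0
  · exact Or.inr ⟨norm_eq_one_of_norm_gt hx hle h0 le_rfl,
      norm_eq_one_of_norm_gt hx hle h0 zero_le_one⟩
  · exact Or.inl ⟨h0.symm, (norm_succ_le_of_norm_le hx hc hle h0.ge).antisymm
      (norm_le_norm_of_forall_norm_le_one hx hc hle 1)⟩

end PadicSequence

theorem g_iterate_succ_fst [Fact p.Prime] (c : ℚ_[p]) (z : ℚ_[p] × ℚ_[p]) (n : ℕ) :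
    ((g c)^[n + 1] z).1 = ((g c)^[n] z).2 := by
  rw [Function.iterate_succ_apply']
  rfl

theorem g_iterate_fst_mul [Fact p.Prime] {c : ℚ_[p]} {z : ℚ_[p] × ℚ_[p]} (hz : z ∈ QSet c)
    (n : ℕ) : ((g c)^[n + 1] z).1 * ((g c)^[n + 2] z).1 = ((g c)^[n] z).1 - c := by
  rw [g_iterate_succ_fst, g_iterate_succ_fst, Function.iterate_succ_apply']
  exact mul_div_cancel₀ _ (hz n)

theorem pnorm_g_iterate [Fact p.Prime] (c : ℚ_[p]) (z : ℚ_[p] × ℚ_[p]) (n : ℕ) :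
    pnorm ((g c)^[n] z) = max ‖((g c)^[n] z).1‖ ‖((g c)^[n + 1] z).1‖ := by
  rw [g_iterate_succ_fst]
  rfl

theorem stmt0_general [Fact p.Prime] (c : ℚ_[p]) (hc : ‖c‖ < 1) :
    {z ∈ QSet c | ‖z.1‖ = 1 ∧ ‖z.2‖ = 1} ⊆ KMinus c ∧
      KMinus c ⊆
        {z ∈ QSet c | ‖z.1‖ = ‖c‖ ∧ ‖z.2‖ = ‖c‖} ∪
          {z ∈ QSet c | ‖z.1‖ = 1 ∧ ‖z.2‖ = 1} := by
  have hsnd (z : ℚ_[p] × ℚ_[p]) : ‖((g c)^[1] z).1‖ = ‖z.2‖ := by rw [g_iterate_succ_fst]; rfl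
  constructor
  · rintro z ⟨hz, h0, h1⟩
    have hone := norm_eq_one_of_mul_eq_sub (x := fun n ↦ ((g c)^[n] z).1) (g_iterate_fst_mul hz)
      hc h0 ((hsnd z).trans h1)
    exact ⟨hz, 1, fun n ↦ by rw [pnorm_g_iterate, hone, hone, max_self]⟩
  · rintro z ⟨hz, M, hM⟩
    have hbdd (n : ℕ) : ‖((g c)^[n] z).1‖ ≤ M :=
      le_trans (by rw [pnorm_g_iterate]; exact le_max_left _ _) (hM n)
    rcases norm_zero_one_eq_of_bounded (x := fun n ↦ ((g c)^[n] z).1) (g_iterate_fst_mul hz) hc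
      hbdd with ⟨h0, h1⟩ | ⟨h0, h1⟩
    · exact Or.inl ⟨hz, h0, hsnd z ▸ h1⟩
    · exact Or.inr ⟨hz, h0, hsnd z ▸ h1⟩

/-- If `|c| < 1` then `Z ⊆ K⁻ ⊆ R ∪ Z`. -/
theorem stmt0 [Fact p.Prime] (hodd : Odd p) (c : ℚ_[p]) (hc : ‖c‖ < 1) :
    {z ∈ QSet c | ‖z.1‖ = 1 ∧ ‖z.2‖ = 1} ⊆ KMinus c ∧
      KMinus c ⊆
        {z ∈ QSet c | ‖z.1‖ = ‖c‖ ∧ ‖z.2‖ = ‖c‖} ∪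
          {z ∈ QSet c | ‖z.1‖ = 1 ∧ ‖z.2‖ = 1} :=
  stmt0_general c hc
end

section
/- Assume |c| > p. Then μ₂(K⁻) = +∞. -/
/-!
The backward map `g` preserves the region `‖x‖ < ‖c‖, 1 < ‖y‖ < ‖c‖`, so this region lies in
`K⁻`. If `‖c‖ < ‖x‖ ‖y‖`, then `g` maps the polydisc `B(x', ‖x'‖) × B(y', ‖y'‖)` around
`(x', y') = f (x, y)` into the polydisc around `(x, y)`. As `p` is odd, `‖2c - c‖ = ‖c‖`, and `g`
maps the polydisc around `(2c, 1/p)` into the invariant region; hence the polydiscs around the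
forward orbit of `(2c, 1/p)` all lie in `K⁻`. Along this orbit `‖x‖` grows geometrically, and
Haar balls whose radii tend to infinity have measure tending to infinity.
-/

variable {p : ℕ}

open Set Metric MeasureTheory Filter Topology
open scoped ENNReal

section Ultrametric

variable {E : Type*} [SeminormedAddCommGroup E] [IsUltrametricDist E]

theorem norm_add_eq_right_of_norm_lt {x y : E} (h : ‖x‖ < ‖y‖) : ‖x + y‖ = ‖y‖ := by
  rw [IsUltrametricDist.norm_add_eq_max_of_norm_ne_norm h.ne, max_eq_right h.le]

theorem norm_eq_of_mem_ball_norm {a b : E} (h : b ∈ ball a ‖a‖) : ‖b‖ = ‖a‖ := by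
  rw [← sub_add_cancel b a, norm_add_eq_right_of_norm_lt (mem_ball_iff_norm.mp h)]

end Ultrametric

section Polydisc

variable {E : Type*} [NormedAddCommGroup E]

/-- The largest polydisc around `z` on which both coordinates have constant norm. -/
def normPolydisc (z : E × E) : Set (E × E) :=
  ball z.1 ‖z.1‖ ×ˢ ball z.2 ‖z.2‖

theorem snd_ne_zero_of_mem_normPolydisc {z w : E × E} (hw : w ∈ normPolydisc z) : w.2 ≠ 0 := by
  intro h
  have := hw.2
  rw [h, mem_ball, dist_zero_left] at this
  exact lt_irrefl _ this

theorem measure_normPolydisc [MeasurableSpace E] [BorelSpace E] (μ : Measure E)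
    [μ.IsAddHaarMeasure] [SFinite μ] (z : E × E) :
    μ.prod μ (normPolydisc z) = μ (ball 0 ‖z.1‖) * μ (ball 0 ‖z.2‖) := by
  rw [normPolydisc, Measure.prod_prod, Measure.addHaar_ball_center μ z.1,
    Measure.addHaar_ball_center μ z.2]

end Polydisc

theorem tendsto_measure_ball_atTop {X : Type*} [PseudoMetricSpace X] [MeasurableSpace X]
    (μ : Measure X) (h : μ univ = ∞) (x : X) :
    Tendsto (fun r : ℝ => μ (ball x r)) atTop (𝓝 ∞) := by
  have hunion : ⋃ r : ℝ, ball x r = univ :=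
    eq_univ_of_forall fun y => mem_iUnion.2 ⟨dist y x + 1, by simp [mem_ball]⟩
  have := tendsto_measure_iUnion_atTop (μ := μ) (s := fun r : ℝ => ball x r)
    fun _ _ hr => ball_subset_ball hr
  rwa [hunion, h] at this

theorem measure_prod_eq_top_of_normPolydisc_subset {E : Type*} [NormedAddCommGroup E]
    [MeasurableSpace E] [BorelSpace E] [WeaklyLocallyCompactSpace E] [NoncompactSpace E]
    (μ : Measure E) [μ.IsAddHaarMeasure] [SFinite μ] {S : Set (E × E)} {z : ℕ → E × E}
    (hS : ∀ k, normPolydisc (z k) ⊆ S) (hfst : Tendsto (fun k => ‖(z k).1‖) atTop atTop)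
    (hsnd : ∀ k, 1 ≤ ‖(z k).2‖) :
    μ.prod μ S = ∞ := by
  have hlower (k : ℕ) : μ (ball 0 ‖(z k).1‖) * μ (ball 0 1) ≤ μ.prod μ S :=
    calc _ ≤ μ (ball 0 ‖(z k).1‖) * μ (ball 0 ‖(z k).2‖) :=
          mul_le_mul_right (measure_mono (ball_subset_ball (hsnd k))) _
      _ = μ.prod μ (normPolydisc (z k)) := (measure_normPolydisc μ _).symm
      _ ≤ _ := measure_mono (hS k)
  have hlim : Tendsto (fun k => μ (ball 0 ‖(z k).1‖) * μ (ball 0 1)) atTop (𝓝 ∞) := by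
    have hball := tendsto_measure_ball_atTop μ (measure_univ_of_isAddLeftInvariant μ) 0
    have := ENNReal.Tendsto.mul_const (b := μ (ball 0 1)) (hball.comp hfst)
      (Or.inl ENNReal.top_ne_zero)
    rwa [ENNReal.top_mul (measure_ball_pos μ 0 one_pos).ne'] at this
  exact top_le_iff.mp (le_of_tendsto' hlim hlower)

section Dynamics

variable [hp : Fact p.Prime]

theorem Padic.norm_two_of_odd (hodd : Odd p) : ‖(2 : ℚ_[p])‖ = 1 := by
  exact_mod_cast Padic.norm_natCast_eq_one_iff.mpr hodd.coprime_two_right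

/-- The map `f` of the paper, inverted by `g c`. -/
noncomputable def forwardMap (c : ℚ_[p]) (z : ℚ_[p] × ℚ_[p]) : ℚ_[p] × ℚ_[p] :=
  (z.1 * z.2 + c, z.1)

theorem mem_KMinus_of_g_mem {c : ℚ_[p]} {z : ℚ_[p] × ℚ_[p]} (hz : z.2 ≠ 0)
    (h : g c z ∈ KMinus c) : z ∈ KMinus c := by
  obtain ⟨hQ, M, hM⟩ := h
  refine ⟨fun n => ?_, max (pnorm z) M, fun n => ?_⟩
  · cases n with
    | zero => exact hz
    | succ n => rw [Function.iterate_succ_apply]; exact hQ n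
  · cases n with
    | zero => exact le_max_left _ _
    | succ n => rw [Function.iterate_succ_apply]; exact (hM n).trans (le_max_right _ _)

theorem subset_KMinus_of_mapsTo {c : ℚ_[p]} {S : Set (ℚ_[p] × ℚ_[p])} {M : ℝ}
    (hS : MapsTo (g c) S S) (hne : ∀ z ∈ S, z.2 ≠ 0) (hM : ∀ z ∈ S, pnorm z ≤ M) :
    S ⊆ KMinus c := fun _ hz =>
  ⟨fun n => hne _ (hS.iterate n hz), M, fun n => hM _ (hS.iterate n hz)⟩

def trappingRegion (c : ℚ_[p]) : Set (ℚ_[p] × ℚ_[p]) :=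
  {z | ‖z.1‖ < ‖c‖ ∧ 1 < ‖z.2‖ ∧ ‖z.2‖ < ‖c‖}

theorem mapsTo_g_trappingRegion (c : ℚ_[p]) :
    MapsTo (g c) (trappingRegion c) (trappingRegion c) := by
  rintro ⟨x, y⟩ ⟨hx, hy, hyc⟩
  have hy0 : 0 < ‖y‖ := one_pos.trans hy
  have hc0 : 0 < ‖c‖ := (norm_nonneg x).trans_lt hx
  have hxc : ‖x - c‖ = ‖c‖ := by
    rw [sub_eq_add_neg, norm_add_eq_right_of_norm_lt (by rwa [norm_neg]), norm_neg]
  refine ⟨hyc, ?_, ?_⟩ <;> simp only [g, norm_div, hxc]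
  · rwa [one_lt_div hy0]
  · rwa [div_lt_iff₀ hy0, lt_mul_iff_one_lt_right hc0]

theorem trappingRegion_subset_KMinus (c : ℚ_[p]) : trappingRegion c ⊆ KMinus c :=
  subset_KMinus_of_mapsTo (mapsTo_g_trappingRegion c)
    (fun _ hz => norm_pos_iff.mp (one_pos.trans hz.2.1)) fun _ hz => max_le hz.1.le hz.2.2.le

theorem normPolydisc_seed_subset_KMinus (hodd : Odd p) {c : ℚ_[p]} (hc : (p : ℝ) < ‖c‖) :
    normPolydisc (2 * c, (p : ℚ_[p])⁻¹) ⊆ KMinus c := by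
  rintro ⟨u, v⟩ hw
  refine mem_KMinus_of_g_mem (snd_ne_zero_of_mem_normPolydisc hw)
    (trappingRegion_subset_KMinus c ?_)
  obtain ⟨hu, hv⟩ := hw
  have h2c : ‖2 * c‖ = ‖c‖ := by rw [norm_mul, Padic.norm_two_of_odd hodd, one_mul]
  have hvp : ‖v‖ = p := by
    rw [norm_eq_of_mem_ball_norm hv, norm_inv, Padic.norm_p, inv_inv]
  have huc : ‖u - c‖ = ‖c‖ := by
    have hu' : ‖u - 2 * c‖ < ‖c‖ := h2c ▸ mem_ball_iff_norm.mp hu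
    rw [show u - c = (u - 2 * c) + c by ring, norm_add_eq_right_of_norm_lt hu']
  have hp1 : (1 : ℝ) < p := Nat.one_lt_cast.mpr hp.out.one_lt
  have hc0 : 0 < ‖c‖ := (Nat.cast_nonneg p).trans_lt hc
  refine ⟨hvp ▸ hc, ?_, ?_⟩ <;> simp only [g, norm_div, huc, hvp]
  · exact (one_lt_div (zero_lt_one.trans hp1)).mpr hc
  · exact div_lt_self hc0 hp1

theorem norm_forwardMap_fst {c : ℚ_[p]} {z : ℚ_[p] × ℚ_[p]} (hz : ‖c‖ < ‖z.1‖ * ‖z.2‖) :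
    ‖(forwardMap c z).1‖ = ‖z.1‖ * ‖z.2‖ := by
  rw [forwardMap, add_comm, norm_add_eq_right_of_norm_lt (by rwa [norm_mul]), norm_mul]

theorem g_mem_normPolydisc {c : ℚ_[p]} {z w : ℚ_[p] × ℚ_[p]} (hz : ‖c‖ < ‖z.1‖ * ‖z.2‖)
    (hw : w ∈ normPolydisc (forwardMap c z)) : g c w ∈ normPolydisc z := by
  obtain ⟨x, y⟩ := z
  obtain ⟨u, v⟩ := w
  have hxy := norm_forwardMap_fst hz
  obtain ⟨hu, hv⟩ := hw
  simp only [forwardMap] at hu hv hxy hz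
  have hxy0 : 0 < ‖x‖ * ‖y‖ := (norm_nonneg c).trans_lt hz
  have hx0 : 0 < ‖x‖ := pos_of_mul_pos_left hxy0 (norm_nonneg y)
  have hy0 : 0 < ‖y‖ := pos_of_mul_pos_right hxy0 (norm_nonneg x)
  have hvx : ‖v‖ = ‖x‖ := norm_eq_of_mem_ball_norm hv
  have hv0 : v ≠ 0 := norm_pos_iff.mp (hvx ▸ hx0)
  refine ⟨hv, ?_⟩
  show (u - c) / v ∈ ball y ‖y‖
  have hsplit : (u - c) / v - y = ((u - (x * y + c)) + (x - v) * y) / v := by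
    field_simp
    ring
  rw [mem_ball_iff_norm, hsplit, norm_div, hvx, div_lt_iff₀ hx0]
  refine (IsUltrametricDist.norm_add_le_max _ _).trans_lt (max_lt ?_ ?_)
  · exact (mem_ball_iff_norm.mp hu).trans_eq (hxy.trans (mul_comm _ _))
  · calc ‖(x - v) * y‖ = ‖v - x‖ * ‖y‖ := by rw [norm_mul, norm_sub_rev]
      _ < ‖x‖ * ‖y‖ := mul_lt_mul_of_pos_right (mem_ball_iff_norm.mp hv) hy0
      _ = ‖y‖ * ‖x‖ := mul_comm _ _

def growthRegion (c : ℚ_[p]) : Set (ℚ_[p] × ℚ_[p]) :=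
  {z | ‖c‖ ≤ ‖z.1‖ ∧ (p : ℝ) ≤ ‖z.2‖}

variable {c : ℚ_[p]} (hc : (p : ℝ) < ‖c‖)
include hc

theorem norm_lt_mul_of_mem_growthRegion {z : ℚ_[p] × ℚ_[p]} (hz : z ∈ growthRegion c) :
    ‖c‖ < ‖z.1‖ * ‖z.2‖ := by
  have hc0 : 0 < ‖c‖ := (Nat.cast_nonneg p).trans_lt hc
  have hp1 : (1 : ℝ) < p := Nat.one_lt_cast.mpr hp.out.one_lt
  calc ‖c‖ < ‖c‖ * p := lt_mul_of_one_lt_right hc0 hp1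
    _ ≤ ‖z.1‖ * ‖z.2‖ := mul_le_mul hz.1 hz.2 (Nat.cast_nonneg p) (norm_nonneg _)

theorem mapsTo_forwardMap_growthRegion :
    MapsTo (forwardMap c) (growthRegion c) (growthRegion c) := by
  intro z hz
  have hp1 : (1 : ℝ) ≤ p := Nat.one_le_cast.mpr hp.out.one_lt.le
  refine ⟨?_, hc.le.trans hz.1⟩
  rw [norm_forwardMap_fst (norm_lt_mul_of_mem_growthRegion hc hz)]
  exact hz.1.trans (le_mul_of_one_le_right (norm_nonneg _) (hp1.trans hz.2))

theorem tendsto_norm_iterate_forwardMap_fst {z : ℚ_[p] × ℚ_[p]} (hz : z ∈ growthRegion c) :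
    Tendsto (fun k => ‖((forwardMap c)^[k] z).1‖) atTop atTop := by
  refine tendsto_atTop_of_geom_le (v := fun k => ‖((forwardMap c)^[k] z).1‖)
    ((Nat.cast_pos.mpr hp.out.pos).trans (hc.trans_le hz.1)) (Nat.one_lt_cast.mpr hp.out.one_lt)
    fun k => ?_
  have hzk := (mapsTo_forwardMap_growthRegion hc).iterate k hz
  rw [Function.iterate_succ_apply', norm_forwardMap_fst (norm_lt_mul_of_mem_growthRegion hc hzk),
    mul_comm]
  exact mul_le_mul_of_nonneg_left hzk.2 (norm_nonneg _)

theorem normPolydisc_iterate_forwardMap_subset_KMinus {z : ℚ_[p] × ℚ_[p]}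
    (hz : z ∈ growthRegion c) (h₀ : normPolydisc z ⊆ KMinus c) (k : ℕ) :
    normPolydisc ((forwardMap c)^[k] z) ⊆ KMinus c := by
  induction k with
  | zero => exact h₀
  | succ k ih =>
    intro w hw
    rw [Function.iterate_succ_apply'] at hw
    have hzk := (mapsTo_forwardMap_growthRegion hc).iterate k hz
    exact mem_KMinus_of_g_mem (snd_ne_zero_of_mem_normPolydisc hw)
      (ih (g_mem_normPolydisc (norm_lt_mul_of_mem_growthRegion hc hzk) hw))

end Dynamics

open MeasureTheory in
theorem stmt3_general [Fact p.Prime] [MeasurableSpace ℚ_[p]] [BorelSpace ℚ_[p]]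
    (hodd : Odd p) (c : ℚ_[p]) (hc : (p : ℝ) < ‖c‖)
    (μ : Measure ℚ_[p]) [μ.IsAddHaarMeasure] :
    (μ.prod μ) (KMinus c) = ⊤ := by
  have hz₀ : ((2 * c, (p : ℚ_[p])⁻¹) : ℚ_[p] × ℚ_[p]) ∈ growthRegion c :=
    ⟨by rw [norm_mul, Padic.norm_two_of_odd hodd, one_mul],
      by rw [norm_inv, Padic.norm_p, inv_inv]⟩
  have hp1 : (1 : ℝ) ≤ p := Nat.one_le_cast.mpr (Fact.out : p.Prime).one_lt.le
  exact measure_prod_eq_top_of_normPolydisc_subset μ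
    (normPolydisc_iterate_forwardMap_subset_KMinus hc hz₀
      (normPolydisc_seed_subset_KMinus hodd hc))
    (tendsto_norm_iterate_forwardMap_fst hc hz₀)
    fun k => hp1.trans ((mapsTo_forwardMap_growthRegion hc).iterate k hz₀).2

open MeasureTheory in
/-- If `|c| > p` then `μ₂(K⁻) = +∞`, where `μ₂ = μ × μ` and `μ` is the Haar
measure on `ℚ_p` normalized so that `μ(ℤ_p) = 1`. -/
theorem stmt3 [Fact p.Prime] [MeasurableSpace ℚ_[p]] [BorelSpace ℚ_[p]]
    (hodd : Odd p) (c : ℚ_[p]) (hc : (p : ℝ) < ‖c‖)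
    (μ : Measure ℚ_[p]) [μ.IsAddHaarMeasure] [SigmaFinite μ]
    (hμ : μ (Metric.closedBall 0 1) = 1) :
    (μ.prod μ) (KMinus c) = ⊤ :=
  stmt3_general hodd c hc μ
end

section
/- Assume |c| < 1. If (x,y) ∈ B, then ‖gⁿ(x,y)‖ → +∞ as n → +∞ (that is, the norms of the backward iterates of (x,y) tend to infinity). -/
/-!
Once the orbit has one coordinate of norm `≤ 1` and the other of norm `> 1`, the map `g` alternates
between the regions `|x| ≤ 1 < |y|` and `|xy| ≤ 1 < |x|` (with `|c| < 1`, the ultrametric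
inequality gives `|x - c| = |x|` when `|x| > 1` and `|x - c| ≤ 1` when `|x| ≤ 1`). Along this
alternation `‖·‖` never decreases and squares every two steps, so it tends to infinity.
A point with both coordinates of norm `> 1` enters that regime after finitely many steps:
either `|x| ≤ |y|`, and two steps suffice, or `g(x,y) = (y, (x - c)/y)` again has both
coordinates large and a strictly smaller first coordinate, which, the norms being powers
of `p`, can only happen finitely often.
-/

variable {p : ℕ}

open Filter

lemma norm_sub_eq_left_of_norm_lt {S : Type*} [SeminormedAddGroup S] [IsUltrametricDist S]
    {a b : S} (h : ‖b‖ < ‖a‖) : ‖a - b‖ = ‖a‖ := by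
  have hne : ‖a‖ ≠ ‖-b‖ := by rw [norm_neg]; exact h.ne'
  rw [sub_eq_add_neg, IsUltrametricDist.norm_add_eq_max_of_norm_ne_norm hne, norm_neg,
    max_eq_left h.le]

lemma norm_sub_le_of_norm_le {S : Type*} [SeminormedAddGroup S] [IsUltrametricDist S]
    {a b : S} {r : ℝ} (ha : ‖a‖ ≤ r) (hb : ‖b‖ ≤ r) : ‖a - b‖ ≤ r := by
  rw [sub_eq_add_neg]
  exact (IsUltrametricDist.norm_add_le_max a (-b)).trans (max_le ha (by rwa [norm_neg]))

lemma tendsto_atTop_of_monotone_of_sq_le {a : ℕ → ℝ} (hmono : Monotone a) (h0 : 1 < a 0)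
    (hsq : ∀ n, a n ^ 2 ≤ a (n + 2)) : Tendsto a atTop atTop := by
  have hpow : ∀ k, a 0 ^ (k + 1) ≤ a (2 * k) := by
    intro k
    induction k with
    | zero => simp
    | succ k ih =>
      calc a 0 ^ (k + 1 + 1) = a 0 ^ (k + 1) * a 0 := pow_succ _ _
        _ ≤ a (2 * k) * a (2 * k) := by
          have h2k := hmono (Nat.zero_le (2 * k))
          exact mul_le_mul ih h2k (by linarith) (by linarith)
        _ = a (2 * k) ^ 2 := (sq _).symm
        _ ≤ a (2 * (k + 1)) := hsq _
  refine tendsto_atTop_atTop_of_monotone hmono fun b => ?_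
  obtain ⟨k, hk⟩ := pow_unbounded_of_one_lt b h0
  exact ⟨2 * k, hk.le.trans ((pow_le_pow_right₀ h0.le k.le_succ).trans (hpow k))⟩

section Dynamics

variable [Fact p.Prime] {c : ℚ_[p]} {z : ℚ_[p] × ℚ_[p]}

lemma iterate_mem_QSet (hz : z ∈ QSet c) (n : ℕ) : (g c)^[n] z ∈ QSet c := fun m => by
  rw [← Function.iterate_add_apply]
  exact hz (m + n)

lemma norm_g_snd (hc : ‖c‖ < 1) (hx : 1 < ‖z.1‖) : ‖(g c z).2‖ = ‖z.1‖ / ‖z.2‖ := by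
  rw [g, norm_div, norm_sub_eq_left_of_norm_lt (hc.trans hx)]

lemma norm_g_snd_le (hc : ‖c‖ < 1) (hx : ‖z.1‖ ≤ 1) : ‖(g c z).2‖ ≤ 1 / ‖z.2‖ := by
  rw [g, norm_div]
  gcongr
  exact norm_sub_le_of_norm_le hx hc.le

def smallLarge : Set (ℚ_[p] × ℚ_[p]) := {z | ‖z.1‖ ≤ 1 ∧ 1 < ‖z.2‖}

def largeSmall : Set (ℚ_[p] × ℚ_[p]) := {z | 1 < ‖z.1‖ ∧ ‖z.1‖ * ‖z.2‖ ≤ 1}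

lemma pnorm_of_mem_smallLarge (hz : z ∈ smallLarge) : pnorm z = ‖z.2‖ :=
  max_eq_right (hz.1.trans hz.2.le)

lemma pnorm_of_mem_largeSmall (hz : z ∈ largeSmall) : pnorm z = ‖z.1‖ := by
  refine max_eq_left ?_
  by_contra! h
  nlinarith [hz.1, hz.2, norm_nonneg z.1]

lemma g_mem_largeSmall (hc : ‖c‖ < 1) (hz : z ∈ smallLarge) : g c z ∈ largeSmall := by
  have hy : 0 < ‖z.2‖ := one_pos.trans hz.2
  refine ⟨hz.2, ?_⟩
  calc ‖z.2‖ * ‖(g c z).2‖ ≤ ‖z.2‖ * (1 / ‖z.2‖) := by gcongr; exact norm_g_snd_le hc hz.1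
    _ = 1 := by field_simp

lemma g_mem_smallLarge (hc : ‖c‖ < 1) (hz0 : z.2 ≠ 0) (hx : 1 < ‖z.1‖) (hy : ‖z.2‖ ≤ 1) :
    g c z ∈ smallLarge := by
  refine ⟨hy, ?_⟩
  rw [norm_g_snd hc hx]
  exact hx.trans_le (le_div_self (by linarith) (norm_pos_iff.2 hz0) hy)

lemma pnorm_g_of_mem_smallLarge (hc : ‖c‖ < 1) (hz : z ∈ smallLarge) :
    pnorm (g c z) = pnorm z := by
  rw [pnorm_of_mem_largeSmall (g_mem_largeSmall hc hz), pnorm_of_mem_smallLarge hz]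
  rfl

lemma sq_pnorm_le_pnorm_g_of_mem_largeSmall (hc : ‖c‖ < 1) (hz : z ∈ largeSmall)
    (hz0 : z.2 ≠ 0) : pnorm z ^ 2 ≤ pnorm (g c z) := by
  have hy : 0 < ‖z.2‖ := norm_pos_iff.2 hz0
  rw [pnorm_of_mem_largeSmall hz]
  calc ‖z.1‖ ^ 2 ≤ ‖z.1‖ / ‖z.2‖ := by
        rw [le_div_iff₀ hy]; nlinarith [hz.2, norm_nonneg z.1]
    _ = ‖(g c z).2‖ := (norm_g_snd hc hz.1).symm
    _ ≤ pnorm (g c z) := le_max_right _ _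

lemma one_lt_pnorm_of_mem_union (hz : z ∈ smallLarge ∪ largeSmall) : 1 < pnorm z := by
  rcases hz with hz | hz
  · exact hz.2.trans_le (le_max_right _ _)
  · exact hz.1.trans_le (le_max_left _ _)

lemma g_mem_union (hc : ‖c‖ < 1) (hz : z ∈ smallLarge ∪ largeSmall) (hz0 : z.2 ≠ 0) :
    g c z ∈ smallLarge ∪ largeSmall := by
  rcases hz with hz | hz
  · exact Or.inr (g_mem_largeSmall hc hz)
  · have hy : ‖z.2‖ ≤ 1 := by nlinarith [hz.1, hz.2, norm_nonneg z.2]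
    exact Or.inl (g_mem_smallLarge hc hz0 hz.1 hy)

lemma pnorm_le_pnorm_g (hc : ‖c‖ < 1) (hz : z ∈ smallLarge ∪ largeSmall) (hz0 : z.2 ≠ 0) :
    pnorm z ≤ pnorm (g c z) := by
  rcases hz with hz | hz
  · exact (pnorm_g_of_mem_smallLarge hc hz).ge
  · have h1 := one_lt_pnorm_of_mem_union (Or.inr hz)
    exact (le_self_pow₀ h1.le two_ne_zero).trans (sq_pnorm_le_pnorm_g_of_mem_largeSmall hc hz hz0)

lemma sq_pnorm_le_pnorm_g_g (hc : ‖c‖ < 1) (hz : z ∈ smallLarge ∪ largeSmall)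
    (hz0 : z.2 ≠ 0) (hgz0 : (g c z).2 ≠ 0) : pnorm z ^ 2 ≤ pnorm (g c (g c z)) := by
  rcases hz with hz | hz
  · rw [← pnorm_g_of_mem_smallLarge hc hz]
    exact sq_pnorm_le_pnorm_g_of_mem_largeSmall hc (g_mem_largeSmall hc hz) hgz0
  · exact (sq_pnorm_le_pnorm_g_of_mem_largeSmall hc hz hz0).trans
      (pnorm_le_pnorm_g hc (g_mem_union hc (Or.inr hz) hz0) hgz0)

lemma iterate_mem_union (hc : ‖c‖ < 1) (hQ : z ∈ QSet c) (hz : z ∈ smallLarge ∪ largeSmall)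
    (n : ℕ) : (g c)^[n] z ∈ smallLarge ∪ largeSmall := by
  induction n with
  | zero => exact hz
  | succ n ih =>
    rw [Function.iterate_succ_apply']
    exact g_mem_union hc ih (hQ n)

lemma tendsto_pnorm_iterate_of_mem_union (hc : ‖c‖ < 1) (hQ : z ∈ QSet c)
    (hz : z ∈ smallLarge ∪ largeSmall) :
    Tendsto (fun n => pnorm ((g c)^[n] z)) atTop atTop := by
  have hstep (n : ℕ) : (g c)^[n + 1] z = g c ((g c)^[n] z) := Function.iterate_succ_apply' _ _ _
  refine tendsto_atTop_of_monotone_of_sq_le (monotone_nat_of_le_succ fun n => ?_)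
    (one_lt_pnorm_of_mem_union hz) fun n => ?_
  · rw [hstep]
    exact pnorm_le_pnorm_g hc (iterate_mem_union hc hQ hz n) (hQ n)
  · rw [hstep, hstep]
    exact sq_pnorm_le_pnorm_g_g hc (iterate_mem_union hc hQ hz n) (hQ n) (hstep n ▸ hQ (n + 1))

lemma exists_iterate_mem_smallLarge_of_norm_fst_le (hc : ‖c‖ < 1) (n : ℕ) :
    ∀ z ∈ QSet c, ‖z.1‖ ≤ (p : ℝ) ^ n → 1 < ‖z.1‖ → 1 < ‖z.2‖ →
      ∃ N, (g c)^[N] z ∈ smallLarge := by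
  induction n with
  | zero =>
    intro z _ hle hx
    rw [pow_zero] at hle
    linarith
  | succ n ih =>
    intro z hQ hle hx hy
    have hy0 : 0 < ‖z.2‖ := one_pos.trans hy
    by_cases hxy : ‖z.1‖ ≤ ‖z.2‖
    · -- `g z` has a small second coordinate, so `g (g z)` lies in `smallLarge`
      refine ⟨2, g_mem_smallLarge hc (hQ 1) hy ?_⟩
      rw [norm_g_snd hc hx]
      exact div_le_one_of_le₀ hxy hy0.le
    · replace hxy := not_le.mp hxy
      have hgQ : g c z ∈ QSet c := iterate_mem_QSet hQ 1
      have hgle : ‖z.2‖ ≤ (p : ℝ) ^ n := by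
        have := (Padic.norm_lt_pow_iff_norm_le_pow_sub_one z.2 (n + 1 : ℕ)).1
          (hxy.trans_le (by exact_mod_cast hle))
        simpa using this
      have hgy : 1 < ‖(g c z).2‖ := by
        rw [norm_g_snd hc hx]
        exact (one_lt_div hy0).2 hxy
      obtain ⟨N, hN⟩ := ih (g c z) hgQ hgle hy hgy
      exact ⟨N + 1, by rwa [Function.iterate_succ_apply]⟩

lemma exists_iterate_mem_smallLarge (hc : ‖c‖ < 1) (hQ : z ∈ QSet c) (hx : 1 < ‖z.1‖)
    (hy : 1 < ‖z.2‖) : ∃ N, (g c)^[N] z ∈ smallLarge := by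
  have hp : (1 : ℝ) < p := by exact_mod_cast (Fact.out : p.Prime).one_lt
  obtain ⟨n, hn⟩ := pow_unbounded_of_one_lt ‖z.1‖ hp
  exact exists_iterate_mem_smallLarge_of_norm_fst_le hc n z hQ hn.le hx hy

end Dynamics

theorem stmt6_general [Fact p.Prime] (c : ℚ_[p]) (hc : ‖c‖ < 1) :
    ∀ z ∈ {z ∈ QSet c | 1 < ‖z.1‖ ∧ 1 < ‖z.2‖},
      Filter.Tendsto (fun n : ℕ => pnorm ((g c)^[n] z)) Filter.atTop Filter.atTop := by
  rintro z ⟨hQ, hx, hy⟩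
  obtain ⟨N, hN⟩ := exists_iterate_mem_smallLarge hc hQ hx hy
  rw [← Filter.tendsto_add_atTop_iff_nat N]
  simpa only [Function.iterate_add_apply] using
    tendsto_pnorm_iterate_of_mem_union hc (iterate_mem_QSet hQ N) (Or.inl hN)

/-- If `|c| < 1` and `(x,y) ∈ B`, then `‖gⁿ(x,y)‖ → +∞`. -/
theorem stmt6 [Fact p.Prime] (hodd : Odd p) (c : ℚ_[p]) (hc : ‖c‖ < 1) :
    ∀ z ∈ {z ∈ QSet c | 1 < ‖z.1‖ ∧ 1 < ‖z.2‖},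
      Filter.Tendsto (fun n : ℕ => pnorm ((g c)^[n] z)) Filter.atTop Filter.atTop :=
  stmt6_general c hc
end

section
/- Assume |c| > 1. Then g(J₀) ⊆ J₀ (the backward image of J₀ under f lies in J₀), and consequently J₀ ⊆ K⁻. -/
variable {p : ℕ}

/-!
For `|x| < |c|` the ultrametric inequality is an equality, `|x - c| = |c|`, so `g(x, y)` has
coordinates of norms `|y|` and `|c| / |y|`. The conditions `|x| < |c|` and `1 < |y| < |c|`
defining `J₀` are therefore reproduced by `g`, and every backward orbit starting in `J₀` stays
in `J₀`, hence in the ball of radius `|c|`.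
-/

open Set Function

section

variable [Fact p.Prime]

def J0Set (c : ℚ_[p]) : Set (ℚ_[p] × ℚ_[p]) :=
  {z ∈ QSet c | ‖z.1‖ < ‖c‖ ∧ 1 < ‖z.2‖ ∧ ‖z.2‖ < ‖c‖}

lemma g_mem_QSet {c : ℚ_[p]} {z : ℚ_[p] × ℚ_[p]} (hz : z ∈ QSet c) : g c z ∈ QSet c :=
  fun n => by simpa only [iterate_succ_apply] using hz (n + 1)

lemma norm_snd_g {c : ℚ_[p]} {z : ℚ_[p] × ℚ_[p]} (hx : ‖z.1‖ < ‖c‖) :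
    ‖(g c z).2‖ = ‖c‖ / ‖z.2‖ := by
  have hsub : ‖z.1 - c‖ = ‖c‖ := by
    rw [sub_eq_add_neg, IsUltrametricDist.norm_add_eq_max_of_norm_ne_norm (by simpa using hx.ne),
      norm_neg, max_eq_right hx.le]
  rw [g, norm_div, hsub]

lemma mapsTo_g_J0Set (c : ℚ_[p]) : MapsTo (g c) (J0Set c) (J0Set c) := by
  rintro z ⟨hQ, hx, hy_gt, hy_lt⟩
  have hy_pos : 0 < ‖z.2‖ := one_pos.trans hy_gt
  refine ⟨g_mem_QSet hQ, hy_lt, ?_, ?_⟩ <;> rw [norm_snd_g hx]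
  · exact (one_lt_div hy_pos).mpr hy_lt
  · exact div_lt_self (hy_pos.trans hy_lt) hy_gt

lemma pnorm_le_of_mem_J0Set {c : ℚ_[p]} {z : ℚ_[p] × ℚ_[p]} (hz : z ∈ J0Set c) :
    pnorm z ≤ ‖c‖ :=
  max_le hz.2.1.le hz.2.2.2.le

lemma J0Set_subset_KMinus (c : ℚ_[p]) : J0Set c ⊆ KMinus c := fun _ hz =>
  ⟨hz.1, ‖c‖, fun n => pnorm_le_of_mem_J0Set ((mapsTo_g_J0Set c).iterate n hz)⟩

end

theorem stmt8_general [Fact p.Prime] (c : ℚ_[p])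
    (J0 : Set (ℚ_[p] × ℚ_[p]))
    (hJ0 : J0 = {z ∈ QSet c | ‖z.1‖ < ‖c‖ ∧ 1 < ‖z.2‖ ∧ ‖z.2‖ < ‖c‖}) :
    g c '' J0 ⊆ J0 ∧ J0 ⊆ KMinus c := by
  subst hJ0
  exact ⟨(mapsTo_g_J0Set c).image_subset, J0Set_subset_KMinus c⟩

/-- If `|c| > 1` then `g(J₀) ⊆ J₀` and `J₀ ⊆ K⁻`. -/
theorem stmt8 [Fact p.Prime] (hodd : Odd p) (c : ℚ_[p]) (hc : 1 < ‖c‖)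
    (J0 : Set (ℚ_[p] × ℚ_[p]))
    (hJ0 : J0 = {z ∈ QSet c | ‖z.1‖ < ‖c‖ ∧ 1 < ‖z.2‖ ∧ ‖z.2‖ < ‖c‖}) :
    g c '' J0 ⊆ J0 ∧ J0 ⊆ KMinus c :=
  stmt8_general c J0 hJ0
end

section
/- Assume |c| > 1. Then J₁ = {(x,y) ∈ Q : |c| < |x| < |c|² and |c|^{-1}|x| < |y| < |c|}, and for every n ≥ 1, J_{2n+1} = B_{2n} ∪ B_{2n+1}, where B_{2n} = {(x,y) ∈ Q : |c|^{F_{2n}} < |x| ≤ |c|^{F_{2n+1}}, |c|^{-1}|x|^{F_{2n}} < |y|^{F_{2n+1}}, and |y|^{F_{2n-1}} < |c|^{-1}|x|^{F_{2n-2}}} and B_{2n+1} = {(x,y) ∈ Q : |c|^{F_{2n+1}} < |x| < |c|^{F_{2n+2}}, |c|^{-1}|x|^{F_{2n}} < |y|^{F_{2n+1}}, and |y|^{F_{2n}} < |c||x|^{F_{2n-1}}}. -/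
/-!
Taking logarithms `A = log |x|`, `B = log |y|`, `L = log |c|`, every defining condition of
`J_{2n+1}`, `B_{2n}` and `B_{2n+1}` becomes a linear inequality in `(A, B)` whose coefficients
are consecutive Fibonacci numbers `e₁, …, e₅ = F_{2n-2}, …, F_{2n+2}`. The line `A = e₄ L` cuts
`J_{2n+1}` into `B_{2n}` and `B_{2n+1}`: within each half-plane, every inequality that occurs in
only one of the two descriptions is a positive combination of the other description's
inequalities, and these combinations close up by Cassini's identity `e₁ e₃ = e₂² + 1`.
-/

variable {p : ℕ}

/-- The Fibonacci sequence with `F₀ = F₁ = 1`. -/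
def Fb (n : ℕ) : ℕ := Nat.fib (n + 1)

/-- `J₁ = {(x,y) ∈ Q : |x| > |c|, |y| < |c|, |y| < |x| < |c||y|}`. -/
def J1 [Fact p.Prime] (c : ℚ_[p]) : Set (ℚ_[p] × ℚ_[p]) :=
  {z ∈ QSet c | ‖c‖ < ‖z.1‖ ∧ ‖z.2‖ < ‖c‖ ∧ ‖z.2‖ < ‖z.1‖ ∧ ‖z.1‖ < ‖c‖ * ‖z.2‖}

/-- `J_{2n+1}`, for `n ≥ 1`. -/
def Jodd [Fact p.Prime] (c : ℚ_[p]) (n : ℕ) : Set (ℚ_[p] × ℚ_[p]) :=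
  {z ∈ QSet c | ‖c‖ * ‖z.2‖ ^ Fb (2*n-1) < ‖z.1‖ ^ Fb (2*n-2) ∧
    ‖z.2‖ ^ Fb (2*n) < ‖c‖ * ‖z.1‖ ^ Fb (2*n-1) ∧
    ‖z.2‖ ^ Fb (2*n+1) < ‖z.1‖ ^ Fb (2*n) ∧
    ‖z.1‖ ^ Fb (2*n) < ‖c‖ * ‖z.2‖ ^ Fb (2*n+1)}

/-- `B_{2n}`, for `n ≥ 1`. -/
def B2n [Fact p.Prime] (c : ℚ_[p]) (n : ℕ) : Set (ℚ_[p] × ℚ_[p]) :=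
  {z ∈ QSet c | ‖c‖ ^ Fb (2*n) < ‖z.1‖ ∧ ‖z.1‖ ≤ ‖c‖ ^ Fb (2*n+1) ∧
    ‖c‖⁻¹ * ‖z.1‖ ^ Fb (2*n) < ‖z.2‖ ^ Fb (2*n+1) ∧
    ‖z.2‖ ^ Fb (2*n-1) < ‖c‖⁻¹ * ‖z.1‖ ^ Fb (2*n-2)}

/-- `B_{2n+1}`, for `n ≥ 1`. -/
def B2n1 [Fact p.Prime] (c : ℚ_[p]) (n : ℕ) : Set (ℚ_[p] × ℚ_[p]) :=
  {z ∈ QSet c | ‖c‖ ^ Fb (2*n+1) < ‖z.1‖ ∧ ‖z.1‖ < ‖c‖ ^ Fb (2*n+2) ∧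
    ‖c‖⁻¹ * ‖z.1‖ ^ Fb (2*n) < ‖z.2‖ ^ Fb (2*n+1) ∧
    ‖z.2‖ ^ Fb (2*n) < ‖c‖ * ‖z.1‖ ^ Fb (2*n-1)}

lemma Fb_pos (k : ℕ) : 0 < Fb k := Nat.fib_pos.2 k.succ_pos

lemma Fb_add_two (k : ℕ) : Fb (k + 2) = Fb k + Fb (k + 1) := Nat.fib_add_two

lemma Fb_two_mul_cassini (m : ℕ) : Fb (2 * m) * Fb (2 * m + 2) = Fb (2 * m + 1) ^ 2 + 1 := by
  induction m with
  | zero => rfl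
  | succ m ih =>
    simp only [Fb] at ih ⊢
    grind [Nat.fib_add_two]

theorem Fb_window_iff_linear {K : Type*} [Field K] [LinearOrder K] [IsStrictOrderedRing K]
    {A B L : K} (m : ℕ) :
    (L + Fb (2*m+1) * B < Fb (2*m) * A ∧ Fb (2*m+2) * B < L + Fb (2*m+1) * A ∧
      Fb (2*m+3) * B < Fb (2*m+2) * A ∧ Fb (2*m+2) * A < L + Fb (2*m+3) * B) ↔
    (Fb (2*m+2) * L < A ∧ A ≤ Fb (2*m+3) * L ∧
        Fb (2*m+2) * A < L + Fb (2*m+3) * B ∧ L + Fb (2*m+1) * B < Fb (2*m) * A) ∨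
      (Fb (2*m+3) * L < A ∧ A < Fb (2*m+4) * L ∧
        Fb (2*m+2) * A < L + Fb (2*m+3) * B ∧ Fb (2*m+2) * B < L + Fb (2*m+1) * A) := by
  have h₃ : (Fb (2*m+2) : K) = Fb (2*m) + Fb (2*m+1) := by exact_mod_cast Fb_add_two (2*m)
  have h₄ : (Fb (2*m+3) : K) = Fb (2*m+1) + Fb (2*m+2) := by exact_mod_cast Fb_add_two (2*m+1)
  have h₅ : (Fb (2*m+4) : K) = Fb (2*m+2) + Fb (2*m+3) := by exact_mod_cast Fb_add_two (2*m+2)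
  have cassini : (Fb (2*m) * Fb (2*m+2) : K) = Fb (2*m+1) ^ 2 + 1 := by
    exact_mod_cast Fb_two_mul_cassini m
  have he₂ : (0 : K) < Fb (2*m+1) := by exact_mod_cast Fb_pos _
  have he₃ : (0 : K) < Fb (2*m+2) := by exact_mod_cast Fb_pos _
  have he₄ : (0 : K) < Fb (2*m+3) := by exact_mod_cast Fb_pos _
  generalize (Fb (2*m) : K) = e₁, (Fb (2*m+1) : K) = e₂, (Fb (2*m+2) : K) = e₃,
    (Fb (2*m+3) : K) = e₄, (Fb (2*m+4) : K) = e₅ at *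
  have cassini₁₄ : e₁ * e₄ = e₂ * e₃ + 1 := by linear_combination e₁ * h₄ + cassini - e₂ * h₃
  have cassini₃₃ : e₃ * e₃ = e₂ * e₄ + 1 := by linear_combination e₃ * h₃ + cassini - e₂ * h₄
  constructor
  · rintro ⟨P₁, P₂, -, P₄⟩
    have lower : e₃ * L < A := by linear_combination e₄ * P₁ + e₂ * P₄ + A * cassini₁₄ - L * h₄
    rcases le_or_gt A (e₄ * L) with hA | hA
    · exact .inl ⟨lower, hA, P₄, P₁⟩
    · exact .inr ⟨hA, by linear_combination e₃ * P₄ + e₄ * P₂ - A * cassini₃₃ - L * h₅, P₄, P₂⟩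
  · rintro (⟨-, hA, P₄, P₁⟩ | ⟨hA, -, P₄, P₂⟩)
    · refine ⟨P₁, lt_of_mul_lt_mul_left ?_ he₂.le, lt_of_mul_lt_mul_left ?_ he₂.le, P₄⟩
      · linear_combination e₃ * P₁ + hA + A * cassini + L * h₄
      · linear_combination e₄ * P₁ + hA + A * cassini₁₄
    · refine ⟨lt_of_mul_lt_mul_left ?_ he₃.le, P₂, lt_of_mul_lt_mul_left ?_ he₃.le, P₄⟩
      · linear_combination e₂ * P₂ + hA - A * cassini - L * h₄
      · linear_combination e₄ * P₂ + hA - A * cassini₃₃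

open Real in
theorem Fb_window_iff_pow {a b C : ℝ} (ha : 0 ≤ a) (hb : 0 < b) (hC : 0 < C) (m : ℕ) :
    (C * b ^ Fb (2*m+1) < a ^ Fb (2*m) ∧ b ^ Fb (2*m+2) < C * a ^ Fb (2*m+1) ∧
      b ^ Fb (2*m+3) < a ^ Fb (2*m+2) ∧ a ^ Fb (2*m+2) < C * b ^ Fb (2*m+3)) ↔
    (C ^ Fb (2*m+2) < a ∧ a ≤ C ^ Fb (2*m+3) ∧ C⁻¹ * a ^ Fb (2*m+2) < b ^ Fb (2*m+3) ∧
        b ^ Fb (2*m+1) < C⁻¹ * a ^ Fb (2*m)) ∨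
      (C ^ Fb (2*m+3) < a ∧ a < C ^ Fb (2*m+4) ∧ C⁻¹ * a ^ Fb (2*m+2) < b ^ Fb (2*m+3) ∧
        b ^ Fb (2*m+2) < C * a ^ Fb (2*m+1)) := by
  rcases ha.eq_or_lt with rfl | ha
  · simp [zero_pow (Fb_pos _).ne', not_lt.2 (pow_nonneg hC.le _),
      not_lt.2 (mul_nonneg hC.le (pow_nonneg hb.le _))]
  obtain ⟨A, rfl⟩ : ∃ A, exp A = a := ⟨log a, exp_log ha⟩
  obtain ⟨B, rfl⟩ : ∃ B, exp B = b := ⟨log b, exp_log hb⟩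
  obtain ⟨L, rfl⟩ : ∃ L, exp L = C := ⟨log C, exp_log hC⟩
  simp only [← exp_nat_mul, ← exp_add, ← exp_neg, exp_lt_exp, exp_le_exp, neg_add_lt_iff_lt_add,
    lt_neg_add_iff_add_lt]
  exact Fb_window_iff_linear m

theorem J1_eq [Fact p.Prime] {c : ℚ_[p]} (hc : c ≠ 0) :
    J1 c = {z ∈ QSet c | ‖c‖ < ‖z.1‖ ∧ ‖z.1‖ < ‖c‖ ^ 2 ∧
      ‖c‖⁻¹ * ‖z.1‖ < ‖z.2‖ ∧ ‖z.2‖ < ‖c‖} := by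
  have hc₀ : 0 < ‖c‖ := norm_pos_iff.2 hc
  ext z
  simp only [J1, Set.mem_ofPred_eq, inv_mul_lt_iff₀ hc₀]
  refine and_congr_right fun _ => ⟨?_, ?_⟩
  · rintro ⟨h₁, h₂, -, h₄⟩
    exact ⟨h₁, by nlinarith, h₄, h₂⟩
  · rintro ⟨h₁, -, h₃, h₄⟩
    exact ⟨h₁, h₄, h₄.trans h₁, h₃⟩

theorem Jodd_eq_B2n_union_B2n1 [Fact p.Prime] {c : ℚ_[p]} (hc : c ≠ 0) {n : ℕ} (hn : 1 ≤ n) :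
    Jodd c n = B2n c n ∪ B2n1 c n := by
  obtain ⟨m, rfl⟩ := Nat.exists_eq_add_of_le' hn
  ext z
  simp only [Jodd, B2n, B2n1, Set.mem_union, Set.mem_ofPred_eq, ← and_or_left]
  rw [show 2 * (m + 1) - 2 = 2 * m by omega, show 2 * (m + 1) - 1 = 2 * m + 1 by omega,
    show 2 * (m + 1) = 2 * m + 2 by omega]
  exact and_congr_right fun hz =>
    Fb_window_iff_pow (norm_nonneg _) (norm_pos_iff.2 (hz 0)) (norm_pos_iff.2 hc) m

theorem stmt9_general [Fact p.Prime] (c : ℚ_[p]) (hc : 1 < ‖c‖) :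
    J1 c = {z ∈ QSet c | ‖c‖ < ‖z.1‖ ∧ ‖z.1‖ < ‖c‖ ^ 2 ∧
        ‖c‖⁻¹ * ‖z.1‖ < ‖z.2‖ ∧ ‖z.2‖ < ‖c‖} ∧
      ∀ n : ℕ, 1 ≤ n → Jodd c n = B2n c n ∪ B2n1 c n := by
  have hc₀ : c ≠ 0 := norm_pos_iff.1 (one_pos.trans hc)
  exact ⟨J1_eq hc₀, fun _ => Jodd_eq_B2n_union_B2n1 hc₀⟩

/-- If `|c| > 1` then `J₁` has the stated closed form and `J_{2n+1} = B_{2n} ∪ B_{2n+1}`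
for all `n ≥ 1`. -/
theorem stmt9 [Fact p.Prime] (hodd : Odd p) (c : ℚ_[p]) (hc : 1 < ‖c‖) :
    J1 c = {z ∈ QSet c | ‖c‖ < ‖z.1‖ ∧ ‖z.1‖ < ‖c‖ ^ 2 ∧
        ‖c‖⁻¹ * ‖z.1‖ < ‖z.2‖ ∧ ‖z.2‖ < ‖c‖} ∧
      ∀ n : ℕ, 1 ≤ n → Jodd c n = B2n c n ∪ B2n1 c n :=
  stmt9_general c hc
end

section
/- Assume |c| > 1. Then J₂ = A₁ ∪ A₂, where A₁ = {(x,y) ∈ Q : |c| < |x| ≤ |c|², |c| < |y|, and |y|² < |c||x|} and A₂ = {(x,y) ∈ Q : |c|² < |x| < |c|³, |c|^{-1}|x| < |y|, and |y|² < |c||x|}; and for every n ≥ 1, J_{2n+2} = A_{2n+1} ∪ A_{2n+2}, where A_{2n+1} = {(x,y) ∈ Q : |c|^{F_{2n+1}} < |x| ≤ |c|^{F_{2n+2}}, |c||x|^{F_{2n-1}} < |y|^{F_{2n}}, and |y|^{F_{2n+2}} < |c||x|^{F_{2n+1}}} and A_{2n+2} = {(x,y) ∈ Q : |c|^{F_{2n+2}}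 < |x| < |c|^{F_{2n+3}}, |c|^{-1}|x|^{F_{2n}} < |y|^{F_{2n+1}}, and |y|^{F_{2n+2}} < |c||x|^{F_{2n+1}}}. -/
variable {p : ℕ}

/-- `J₂ = {(x,y) ∈ Q : |y| > |c|, |x| < |c||y|, |x| < |y|² < |c||x|}`. -/
def J2 [Fact p.Prime] (c : ℚ_[p]) : Set (ℚ_[p] × ℚ_[p]) :=
  {z ∈ QSet c | ‖c‖ < ‖z.2‖ ∧ ‖z.1‖ < ‖c‖ * ‖z.2‖ ∧
    ‖z.1‖ < ‖z.2‖ ^ 2 ∧ ‖z.2‖ ^ 2 < ‖c‖ * ‖z.1‖}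

/-- `J_{2n+2}`, for `n ≥ 1`. -/
def Jeven [Fact p.Prime] (c : ℚ_[p]) (n : ℕ) : Set (ℚ_[p] × ℚ_[p]) :=
  {z ∈ QSet c | ‖c‖ * ‖z.1‖ ^ Fb (2*n-1) < ‖z.2‖ ^ Fb (2*n) ∧
    ‖z.1‖ ^ Fb (2*n) < ‖c‖ * ‖z.2‖ ^ Fb (2*n+1) ∧
    ‖z.1‖ ^ Fb (2*n+1) < ‖z.2‖ ^ Fb (2*n+2) ∧
    ‖z.2‖ ^ Fb (2*n+2) < ‖c‖ * ‖z.1‖ ^ Fb (2*n+1)}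

/-- `A₁`. -/
def A1 [Fact p.Prime] (c : ℚ_[p]) : Set (ℚ_[p] × ℚ_[p]) :=
  {z ∈ QSet c | ‖c‖ < ‖z.1‖ ∧ ‖z.1‖ ≤ ‖c‖ ^ 2 ∧ ‖c‖ < ‖z.2‖ ∧
    ‖z.2‖ ^ 2 < ‖c‖ * ‖z.1‖}

/-- `A₂`. -/
def A2 [Fact p.Prime] (c : ℚ_[p]) : Set (ℚ_[p] × ℚ_[p]) :=
  {z ∈ QSet c | ‖c‖ ^ 2 < ‖z.1‖ ∧ ‖z.1‖ < ‖c‖ ^ 3 ∧ ‖c‖⁻¹ * ‖z.1‖ < ‖z.2‖ ∧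
    ‖z.2‖ ^ 2 < ‖c‖ * ‖z.1‖}

/-- `A_{2n+1}`, for `n ≥ 1`. -/
def A2n1 [Fact p.Prime] (c : ℚ_[p]) (n : ℕ) : Set (ℚ_[p] × ℚ_[p]) :=
  {z ∈ QSet c | ‖c‖ ^ Fb (2*n+1) < ‖z.1‖ ∧ ‖z.1‖ ≤ ‖c‖ ^ Fb (2*n+2) ∧
    ‖c‖ * ‖z.1‖ ^ Fb (2*n-1) < ‖z.2‖ ^ Fb (2*n) ∧
    ‖z.2‖ ^ Fb (2*n+2) < ‖c‖ * ‖z.1‖ ^ Fb (2*n+1)}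

/-- `A_{2n+2}`, for `n ≥ 1`. -/
def A2n2 [Fact p.Prime] (c : ℚ_[p]) (n : ℕ) : Set (ℚ_[p] × ℚ_[p]) :=
  {z ∈ QSet c | ‖c‖ ^ Fb (2*n+2) < ‖z.1‖ ∧ ‖z.1‖ < ‖c‖ ^ Fb (2*n+3) ∧
    ‖c‖⁻¹ * ‖z.1‖ ^ Fb (2*n) < ‖z.2‖ ^ Fb (2*n+1) ∧
    ‖z.2‖ ^ Fb (2*n+2) < ‖c‖ * ‖z.1‖ ^ Fb (2*n+1)}

/-!
Taking logarithms of absolute values, each set becomes a region of the plane cut out by linear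
inequalities with Fibonacci coefficients. Cassini's identity `F_{2n}² = F_{2n-1} F_{2n+1} + 1`
makes the slacks of these inequalities, together with `F_{2n+2} log |c| - log |x|`, linearly
dependent with positive coefficients. This gives the bounds
`F_{2n+1} log |c| < log |x| < F_{2n+3} log |c|` on `J_{2n+2}`, and on either side of the line
`log |x| = F_{2n+2} log |c|` it recovers the two inequalities of `J_{2n+2}` that `A_{2n+1}`,
respectively `A_{2n+2}`, omit.
-/

theorem Nat.fib_two_mul_add_one_mul_self (j : ℕ) :
    fib (2 * j + 1) * fib (2 * j + 1) = fib (2 * j) * fib (2 * j + 2) + 1 := by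
  have h := Int.fib_succ_mul_fib_pred_sub_fib_sq (2 * j + 1)
  rw [show (2 * j + 1 : ℤ) + 1 = ((2 * j + 2 : ℕ) : ℤ) by push_cast; ring,
    show (2 * j + 1 : ℤ) - 1 = ((2 * j : ℕ) : ℤ) by push_cast; ring,
    show (2 * j + 1 : ℤ) = ((2 * j + 1 : ℕ) : ℤ) by push_cast; ring] at h
  simp only [Int.fib_natCast, Int.natAbs_natCast, (odd_two_mul_add_one j).neg_one_pow] at h
  zify
  linear_combination -h

/-- Satisfied by the exponents `F_{2n-1}, …, F_{2n+3}` of `J_{2n+2}`, and by `0, 1, 1, 2, 3`,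
which turns `J₂ = A₁ ∪ A₂` into the case `n = 0`. -/
structure CassiniQuintuple (k l m s t : ℕ) : Prop where
  m_eq : m = k + l
  s_eq : s = l + m
  t_eq : t = m + s
  cassini : l * l = k * m + 1

namespace CassiniQuintuple

variable {k l m s t : ℕ}

theorem fib (j : ℕ) :
    CassiniQuintuple (Nat.fib (2 * j)) (Nat.fib (2 * j + 1)) (Nat.fib (2 * j + 2))
      (Nat.fib (2 * j + 3)) (Nat.fib (2 * j + 4)) where
  m_eq := Nat.fib_add_two
  s_eq := Nat.fib_add_two
  t_eq := Nat.fib_add_two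
  cassini := Nat.fib_two_mul_add_one_mul_self j

theorem l_pos (h : CassiniQuintuple k l m s t) : 0 < l :=
  Nat.pos_of_ne_zero fun hl => by simpa [hl] using h.cassini

theorem m_pos (h : CassiniQuintuple k l m s t) : 0 < m := by
  have := h.l_pos; have := h.m_eq; omega

theorem s_pos (h : CassiniQuintuple k l m s t) : 0 < s := by
  have := h.l_pos; have := h.s_eq; omega

/-- `J_{2n+2} = A_{2n+1} ∪ A_{2n+2}` in the coordinates `g = log |c|`, `α = log |x|`,
`β = log |y|`. -/
theorem region_iff {K : Type*} [Field K] [LinearOrder K] [IsStrictOrderedRing K] {g α β : K}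
    (h : CassiniQuintuple k l m s t) :
    (g + k * α < l * β ∧ l * α < g + m * β ∧ m * α < s * β ∧ s * β < g + m * α) ↔
      (m * g < α ∧ α ≤ s * g ∧ g + k * α < l * β ∧ s * β < g + m * α) ∨
      (s * g < α ∧ α < t * g ∧ -g + l * α < m * β ∧ s * β < g + m * α) := by
  have hl : (0 : K) < l := by exact_mod_cast h.l_pos
  have hm : (0 : K) < m := by exact_mod_cast h.m_pos
  have hs : (0 : K) < s := by exact_mod_cast h.s_pos
  have hmkl : (m : K) = k + l := by exact_mod_cast h.m_eq
  have hslm : (s : K) = l + m := by exact_mod_cast h.s_eq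
  have htms : (t : K) = m + s := by exact_mod_cast h.t_eq
  have hcas : (l : K) * l = k * (k + l) + 1 := by rw [← hmkl]; exact_mod_cast h.cassini
  set u := l * β - (g + k * α) with hu_def
  set w := g + m * β - l * α with hw_def
  set r := s * β - m * α with hr_def
  set v := g + m * α - s * β with hv_def
  -- Cassini's identity makes the slacks `u, w, r, v` and `s g - α` linearly dependent:
  have e1 : α - m * g = s * u + l * v := by
    rw [hu_def, hv_def, hslm, hmkl]; linear_combination -α * hcas
  have e2 : t * g - α = s * w + m * v := by
    rw [hw_def, hv_def, htms, hslm, hmkl]; linear_combination α * hcas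
  have e3 : l * w = m * u + (s * g - α) := by
    rw [hw_def, hu_def, hslm, hmkl]; linear_combination -α * hcas
  have e4 : l * r = s * u + (s * g - α) := by
    rw [hr_def, hu_def, hslm, hmkl]; linear_combination -α * hcas
  have e5 : m * u = l * w + (α - s * g) := by
    rw [hw_def, hu_def, hslm, hmkl]; linear_combination α * hcas
  have e6 : m * r = s * w + (α - s * g) := by
    rw [hr_def, hw_def, hslm, hmkl]; linear_combination α * hcas
  have hw_iff : -g + l * α < m * β ↔ 0 < w := by rw [hw_def, sub_pos, neg_add_lt_iff_lt_add]
  rw [← sub_pos (b := g + k * α), ← sub_pos (b := l * α), ← sub_pos (b := m * α),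
    ← sub_pos (b := s * β), hw_iff]
  constructor
  · rintro ⟨hu, hw, -, hv⟩
    rcases le_or_gt α (s * g) with hd | hd
    · exact Or.inl ⟨by linarith [mul_pos hs hu, mul_pos hl hv], hd, hu, hv⟩
    · exact Or.inr ⟨hd, by linarith [mul_pos hs hw, mul_pos hm hv], hw, hv⟩
  · rintro (⟨-, hd, hu, hv⟩ | ⟨hd, -, hw, hv⟩)
    · refine ⟨hu, pos_of_mul_pos_right ?_ hl.le, pos_of_mul_pos_right ?_ hl.le, hv⟩
      · exact e3 ▸ add_pos_of_pos_of_nonneg (mul_pos hm hu) (sub_nonneg.2 hd)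
      · exact e4 ▸ add_pos_of_pos_of_nonneg (mul_pos hs hu) (sub_nonneg.2 hd)
    · refine ⟨pos_of_mul_pos_right ?_ hm.le, hw, pos_of_mul_pos_right ?_ hm.le, hv⟩
      · exact e5 ▸ add_pos (mul_pos hl hw) (sub_pos.2 hd)
      · exact e6 ▸ add_pos (mul_pos hs hw) (sub_pos.2 hd)

theorem region_iff_pow {γ a b : ℝ} (h : CassiniQuintuple k l m s t)
    (hγ : 0 < γ) (ha : 0 ≤ a) (hb : 0 < b) :
    (γ * a ^ k < b ^ l ∧ a ^ l < γ * b ^ m ∧ a ^ m < b ^ s ∧ b ^ s < γ * a ^ m) ↔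
      (γ ^ m < a ∧ a ≤ γ ^ s ∧ γ * a ^ k < b ^ l ∧ b ^ s < γ * a ^ m) ∨
      (γ ^ s < a ∧ a < γ ^ t ∧ γ⁻¹ * a ^ l < b ^ m ∧ b ^ s < γ * a ^ m) := by
  rcases ha.eq_or_lt with rfl | ha
  · simp [zero_pow h.m_pos.ne', (pow_pos hb s).not_gt]
  rw [← Real.exp_log hγ, ← Real.exp_log ha, ← Real.exp_log hb]
  simp only [← Real.exp_nat_mul, ← Real.exp_add, ← Real.exp_neg, Real.exp_lt_exp,
    Real.exp_le_exp]
  exact h.region_iff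

end CassiniQuintuple

theorem stmt10_general [Fact p.Prime] (c : ℚ_[p]) (hc : 1 < ‖c‖) :
    J2 c = A1 c ∪ A2 c ∧ ∀ n : ℕ, 1 ≤ n → Jeven c n = A2n1 c n ∪ A2n2 c n := by
  have region {k l m s t : ℕ} (h : CassiniQuintuple k l m s t) (z : ℚ_[p] × ℚ_[p])
      (hz : z ∈ QSet c) :=
    h.region_iff_pow (zero_lt_one.trans hc) (norm_nonneg z.1) (norm_pos_iff.2 (hz 0))
  refine ⟨?_, fun n hn => ?_⟩
  · rw [J2, A1, A2, ← Set.sep_or, Set.sep_ext_iff]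
    intro z hz
    simpa [Nat.fib_add_two] using region (CassiniQuintuple.fib 0) z hz
  · have hk : Fb (2 * n - 1) = Nat.fib (2 * n) := by rw [Fb, Nat.sub_add_cancel (by omega)]
    rw [Jeven, A2n1, A2n2, hk, ← Set.sep_or, Set.sep_ext_iff]
    exact region (CassiniQuintuple.fib n)

/-- If `|c| > 1` then `J₂ = A₁ ∪ A₂` and `J_{2n+2} = A_{2n+1} ∪ A_{2n+2}` for all `n ≥ 1`. -/
theorem stmt10 [Fact p.Prime] (hodd : Odd p) (c : ℚ_[p]) (hc : 1 < ‖c‖) :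
    J2 c = A1 c ∪ A2 c ∧ ∀ n : ℕ, 1 ≤ n → Jeven c n = A2n1 c n ∪ A2n2 c n :=
  stmt10_general c hc
end

section
/- Assume |c| = p^d with d ≥ 1 an integer, and let (x,y) ∈ G with |x| = p^a and |y| = p^b, where a, b are integers with a ≤ d < b. Write (x_{-n}, y_{-n}) = gⁿ(x,y). Then for every i ≥ 0: |x_{-2i-1}| ≥ p^{2^i b - (2^i - 1)d} and |y_{-2i-1}| ≤ p^{2^i d - 2^i b}, and |x_{-2i-2}| ≤ p^{2^i d - 2^i b} and |y_{-2i-2}| ≥ p^{2^{i+1} b - (2^{i+1} - 1)d}. In particular ‖gⁿ(x,y)‖ ≥ p^{2^{⌊n/2⌋}(b - d) + d} for all n ≥ 1, so ‖gⁿ(x,y)‖ → +∞ as n → +∞. -/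
variable {p : ℕ}

/-! Backward steps alternate between a large and a small first coordinate. If
`|x| ≤ |c| < L ≤ |y|`, then `g(x,y) = (y, (x-c)/y)` has second coordinate of norm `≤ |c|/L`.
If `|c| < L ≤ |x|` and `|y| ≤ |c|/L`, then `|x - c| = |x|` by the ultrametric inequality, so
`g(x,y)` has second coordinate of norm `≥ L²/|c|`, while its first coordinate has norm
`≤ |c|/L ≤ |c|` (as `|c| ≥ 1`). Two steps thus square `L/|c|`, so the odd iterates are bounded
below by `L_i = |c| (|y|/|c|)^(2^i) = p^(d + 2^i (b-d))`. -/

noncomputable def backwardBound (C B : ℝ) (i : ℕ) : ℝ := C * (B / C) ^ 2 ^ i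

section BackwardBound

variable {C B : ℝ}

lemma backwardBound_zero (hC : C ≠ 0) : backwardBound C B 0 = B := by
  simp [backwardBound, mul_div_cancel₀ B hC]

lemma backwardBound_succ (hC : C ≠ 0) (i : ℕ) :
    backwardBound C B (i + 1) = backwardBound C B i ^ 2 / C := by
  simp only [backwardBound, pow_succ, pow_mul]
  field_simp

lemma lt_backwardBound (hC : 0 < C) (hCB : C < B) (i : ℕ) : C < backwardBound C B i :=
  lt_mul_of_one_lt_right hC (one_lt_pow₀ ((one_lt_div hC).2 hCB) (by positivity))

lemma tendsto_backwardBound (hC : 0 < C) (hCB : C < B) :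
    Filter.Tendsto (backwardBound C B) Filter.atTop Filter.atTop :=
  ((tendsto_pow_atTop_atTop_of_one_lt ((one_lt_div hC).2 hCB)).comp
    (tendsto_pow_atTop_atTop_of_one_lt one_lt_two)).const_mul_atTop hC

lemma backwardBound_zpow {x : ℝ} (hx : x ≠ 0) (d b : ℤ) (i : ℕ) :
    backwardBound (x ^ d) (x ^ b) i = x ^ (d + 2 ^ i * (b - d)) := by
  rw [backwardBound, ← zpow_sub₀ hx, ← zpow_natCast, ← zpow_mul, ← zpow_add₀ hx]
  push_cast
  ring_nf

end BackwardBound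

section BackwardOrbit

variable [Fact p.Prime] {c : ℚ_[p]}

lemma g_iterate_succ (n : ℕ) (z : ℚ_[p] × ℚ_[p]) :
    (g c)^[n + 1] z = g c ((g c)^[n] z) :=
  Function.iterate_succ_apply' _ _ _

lemma norm_g_snd_le_s17 {w : ℚ_[p] × ℚ_[p]} (hw : ‖w.1‖ ≤ ‖c‖) : ‖(g c w).2‖ ≤ ‖c‖ / ‖w.2‖ := by
  have hsub : ‖w.1 - c‖ ≤ ‖c‖ := by
    simpa [sub_eq_add_neg] using (IsUltrametricDist.norm_add_le_max w.1 (-c)).trans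
      (max_le hw (norm_neg c).le)
  rw [g, norm_div]
  exact div_le_div_of_nonneg_right hsub (norm_nonneg _)

lemma norm_g_snd_eq {w : ℚ_[p] × ℚ_[p]} (hw : ‖c‖ < ‖w.1‖) : ‖(g c w).2‖ = ‖w.1‖ / ‖w.2‖ := by
  have hsub : ‖w.1 - c‖ = ‖w.1‖ := by
    rw [sub_eq_add_neg, IsUltrametricDist.norm_add_eq_max_of_norm_ne_norm (by simpa using hw.ne'),
      norm_neg, max_eq_left hw.le]
  rw [g, norm_div, hsub]

lemma norm_g_bounds_of_norm_fst_le {w : ℚ_[p] × ℚ_[p]} {M : ℝ} (hM : 0 < M)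
    (h1 : ‖w.1‖ ≤ ‖c‖) (h2 : M ≤ ‖w.2‖) :
    M ≤ ‖(g c w).1‖ ∧ ‖(g c w).2‖ ≤ ‖c‖ / M :=
  ⟨h2, (norm_g_snd_le_s17 h1).trans (div_le_div_of_nonneg_left (norm_nonneg c) hM h2)⟩

lemma norm_g_bounds_of_lt_norm_fst {w : ℚ_[p] × ℚ_[p]} {L : ℝ} (hcL : ‖c‖ < L)
    (h1 : L ≤ ‖w.1‖) (h2 : ‖w.2‖ ≤ ‖c‖ / L) (hw : w.2 ≠ 0) :
    ‖(g c w).1‖ ≤ ‖c‖ / L ∧ L ^ 2 / ‖c‖ ≤ ‖(g c w).2‖ := by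
  have hL : 0 < L := (norm_nonneg c).trans_lt hcL
  refine ⟨h2, ?_⟩
  rw [norm_g_snd_eq (hcL.trans_le h1)]
  calc L ^ 2 / ‖c‖ = L / (‖c‖ / L) := by field_simp
    _ ≤ ‖w.1‖ / ‖w.2‖ := div_le_div₀ (hL.le.trans h1) h1 (norm_pos_iff.2 hw) h2

variable {z : ℚ_[p] × ℚ_[p]}

theorem norm_g_iterate_bounds (hc : 1 ≤ ‖c‖) (hzQ : z ∈ QSet c)
    (hz1 : ‖z.1‖ ≤ ‖c‖) (hz2 : ‖c‖ < ‖z.2‖) (i : ℕ) :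
    backwardBound ‖c‖ ‖z.2‖ i ≤ ‖((g c)^[2 * i + 1] z).1‖ ∧
      ‖((g c)^[2 * i + 1] z).2‖ ≤ ‖c‖ / backwardBound ‖c‖ ‖z.2‖ i ∧
      ‖((g c)^[2 * i + 2] z).1‖ ≤ ‖c‖ / backwardBound ‖c‖ ‖z.2‖ i ∧
      backwardBound ‖c‖ ‖z.2‖ (i + 1) ≤ ‖((g c)^[2 * i + 2] z).2‖ := by
  set L := backwardBound ‖c‖ ‖z.2‖
  have hc0 : 0 < ‖c‖ := one_pos.trans_le hc
  have hcL : ∀ i, ‖c‖ < L i := lt_backwardBound hc0 hz2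
  have even_of_odd : ∀ i, L i ≤ ‖((g c)^[2 * i + 1] z).1‖ →
      ‖((g c)^[2 * i + 1] z).2‖ ≤ ‖c‖ / L i →
      ‖((g c)^[2 * i + 2] z).1‖ ≤ ‖c‖ / L i ∧ L (i + 1) ≤ ‖((g c)^[2 * i + 2] z).2‖ := by
    intro i h1 h2
    rw [g_iterate_succ, show L (i + 1) = L i ^ 2 / ‖c‖ from backwardBound_succ hc0.ne' i]
    exact norm_g_bounds_of_lt_norm_fst (hcL i) h1 h2 (hzQ _)
  have odd : ∀ i, L i ≤ ‖((g c)^[2 * i + 1] z).1‖ ∧ ‖((g c)^[2 * i + 1] z).2‖ ≤ ‖c‖ / L i := by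
    intro i
    induction i with
    | zero =>
      rw [g_iterate_succ, Function.iterate_zero_apply]
      simp only [L, backwardBound_zero hc0.ne']
      exact norm_g_bounds_of_norm_fst_le (hc0.trans hz2) hz1 le_rfl
    | succ i ih =>
      obtain ⟨h1, h2⟩ := even_of_odd i ih.1 ih.2
      have hsmall : ‖c‖ / L i ≤ ‖c‖ := div_le_self hc0.le (hc.trans (hcL i).le)
      rw [show 2 * (i + 1) + 1 = 2 * i + 2 + 1 by ring, g_iterate_succ]
      exact norm_g_bounds_of_norm_fst_le (hc0.trans (hcL _)) (h1.trans hsmall) h2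
  exact ⟨(odd i).1, (odd i).2, even_of_odd i (odd i).1 (odd i).2⟩

theorem backwardBound_le_pnorm_g_iterate (hc : 1 ≤ ‖c‖) (hzQ : z ∈ QSet c)
    (hz1 : ‖z.1‖ ≤ ‖c‖) (hz2 : ‖c‖ < ‖z.2‖) {n : ℕ} (hn : 1 ≤ n) :
    backwardBound ‖c‖ ‖z.2‖ (n / 2) ≤ pnorm ((g c)^[n] z) := by
  obtain ⟨k, rfl | rfl⟩ := Nat.even_or_odd' n
  · obtain ⟨i, rfl⟩ : ∃ i, k = i + 1 := ⟨k - 1, by omega⟩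
    rw [show 2 * (i + 1) / 2 = i + 1 by omega]
    exact (norm_g_iterate_bounds hc hzQ hz1 hz2 i).2.2.2.trans (le_max_right _ _)
  · rw [show (2 * k + 1) / 2 = k by omega]
    exact (norm_g_iterate_bounds hc hzQ hz1 hz2 k).1.trans (le_max_left _ _)

theorem tendsto_pnorm_g_iterate (hc : 1 ≤ ‖c‖) (hzQ : z ∈ QSet c)
    (hz1 : ‖z.1‖ ≤ ‖c‖) (hz2 : ‖c‖ < ‖z.2‖) :
    Filter.Tendsto (fun n => pnorm ((g c)^[n] z)) Filter.atTop Filter.atTop := by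
  refine Filter.tendsto_atTop_mono' _ ?_ ((tendsto_backwardBound (one_pos.trans_le hc) hz2).comp
    (Nat.tendsto_div_const_atTop two_ne_zero))
  filter_upwards [Filter.eventually_ge_atTop 1] with n hn
  exact backwardBound_le_pnorm_g_iterate hc hzQ hz1 hz2 hn

end BackwardOrbit

theorem stmt17_general [Fact p.Prime] (c : ℚ_[p]) (d b : ℤ)
    (hd : 1 ≤ d) (hc : ‖c‖ = (p : ℝ) ^ d)
    (z : ℚ_[p] × ℚ_[p])
    (hzG : z ∈ {w ∈ QSet c | ‖w.1‖ ≤ ‖c‖ ∧ ‖c‖ < ‖w.2‖})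
    (hy : ‖z.2‖ = (p : ℝ) ^ b) :
    (∀ i : ℕ,
      (p : ℝ) ^ (2 ^ i * b - (2 ^ i - 1) * d) ≤ ‖((g c)^[2*i+1] z).1‖ ∧
      ‖((g c)^[2*i+1] z).2‖ ≤ (p : ℝ) ^ (2 ^ i * d - 2 ^ i * b) ∧
      ‖((g c)^[2*i+2] z).1‖ ≤ (p : ℝ) ^ (2 ^ i * d - 2 ^ i * b) ∧
      (p : ℝ) ^ (2 ^ (i+1) * b - (2 ^ (i+1) - 1) * d) ≤ ‖((g c)^[2*i+2] z).2‖) ∧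
    (∀ n : ℕ, 1 ≤ n → (p : ℝ) ^ (2 ^ (n / 2) * (b - d) + d) ≤ pnorm ((g c)^[n] z)) ∧
    Filter.Tendsto (fun n : ℕ => pnorm ((g c)^[n] z)) Filter.atTop Filter.atTop := by
  obtain ⟨hzQ, hz1, hz2⟩ := hzG
  have hp : (p : ℝ) ≠ 0 := Nat.cast_ne_zero.2 (Fact.out : p.Prime).ne_zero
  have hc1 : 1 ≤ ‖c‖ := hc ▸ one_le_zpow₀ (by exact_mod_cast (Fact.out : p.Prime).one_le) (by omega)
  have hL : ∀ i : ℕ, backwardBound ‖c‖ ‖z.2‖ i = (p : ℝ) ^ (d + 2 ^ i * (b - d)) := by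
    intro i; rw [hc, hy, backwardBound_zpow hp]
  have hcL : ∀ i : ℕ, ‖c‖ / backwardBound ‖c‖ ‖z.2‖ i = (p : ℝ) ^ (2 ^ i * d - 2 ^ i * b) := by
    intro i; rw [hL, hc, ← zpow_sub₀ hp]; ring_nf
  refine ⟨fun i => ?_, fun n hn => ?_, tendsto_pnorm_g_iterate hc1 hzQ hz1 hz2⟩
  · obtain ⟨h1, h2, h3, h4⟩ := norm_g_iterate_bounds hc1 hzQ hz1 hz2 i
    rw [hcL] at h2 h3
    rw [hL] at h1 h4
    exact ⟨by convert h1 using 2; ring, h2, h3, by convert h4 using 2; ring⟩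
  · convert backwardBound_le_pnorm_g_iterate hc1 hzQ hz1 hz2 hn using 1
    rw [hL]; ring_nf

/-- If `|c| = p^d` (`d ≥ 1`) and `(x,y) ∈ G` with `|x| = p^a`, `|y| = p^b`,
`a ≤ d < b`, then the stated bounds on the backward iterates hold, and
`‖gⁿ(x,y)‖ → +∞`. -/
theorem stmt17 [Fact p.Prime] (hodd : Odd p) (c : ℚ_[p]) (d a b : ℤ)
    (hd : 1 ≤ d) (hc : ‖c‖ = (p : ℝ) ^ d)
    (z : ℚ_[p] × ℚ_[p])
    (hzG : z ∈ {w ∈ QSet c | ‖w.1‖ ≤ ‖c‖ ∧ ‖c‖ < ‖w.2‖})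
    (hx : ‖z.1‖ = (p : ℝ) ^ a) (hy : ‖z.2‖ = (p : ℝ) ^ b)
    (had : a ≤ d) (hdb : d < b) :
    (∀ i : ℕ,
      (p : ℝ) ^ (2 ^ i * b - (2 ^ i - 1) * d) ≤ ‖((g c)^[2*i+1] z).1‖ ∧
      ‖((g c)^[2*i+1] z).2‖ ≤ (p : ℝ) ^ (2 ^ i * d - 2 ^ i * b) ∧
      ‖((g c)^[2*i+2] z).1‖ ≤ (p : ℝ) ^ (2 ^ i * d - 2 ^ i * b) ∧
      (p : ℝ) ^ (2 ^ (i+1) * b - (2 ^ (i+1) - 1) * d) ≤ ‖((g c)^[2*i+2] z).2‖) ∧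
    (∀ n : ℕ, 1 ≤ n → (p : ℝ) ^ (2 ^ (n / 2) * (b - d) + d) ≤ pnorm ((g c)^[n] z)) ∧
    Filter.Tendsto (fun n : ℕ => pnorm ((g c)^[n] z)) Filter.atTop Filter.atTop :=
  stmt17_general c d b hd hc z hzG hy
end
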